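/- arXiv:2108.06719 — 5 statements merged into one kernel-verified Lean document; each statement's English description precedes it below -/
import Mathlib

section
/- Consider n agents with dynamics σ_i' = Sσ_i + Bχ_i, i = 1,…,n, under the perturbed consensus controller χ_i = −M Σ_{j∈N_i} a_{ij}(σ_i − σ_j) + M φ_i, where φ_i(t) ∈ ℝ^p is an external perturbation. Assume the directed weighted graph with adjacency matrix A = (a_{ij}) contains a spanning tree. If the gain matrix M is selected such that A_ζ = I_{n−1} ⊗ S − H ⊗ BM is Hurwitz, then limsup_{t→∞} ‖χ(t)‖ ≤ γ_χ · limsup_{t→∞} ‖φ(t)‖ for any bounded φ(t), where γ_χ = ‖M‖(‖LU‖·γ_ζ + 1) and γ_ζ = √(ϖ(Q))·‖Q(W ⊗ BM)‖ with Q = Qᵀ > 0 the solution of QA_ζ + A_ζᵀQ = −2I. (Lemma 2 of the paper.) -/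
open Filter Matrix Kronecker

/-- The `ℓ²`-operator norm of a real matrix (Euclidean norm for vectors). -/
noncomputable def opNorm {k l : Type*} [Fintype k] [Fintype l] [DecidableEq l]
    (A : Matrix k l ℝ) : ℝ :=
  ‖LinearMap.toContinuousLinearMap (Matrix.toEuclideanLin A)‖

/-- The maximum eigenvalue `λ_max(P)` of a (symmetric) real matrix. -/
noncomputable def eigMax {k : Type*} [Fintype k] [DecidableEq k]
    (P : Matrix k k ℝ) : ℝ := sSup (spectrum ℝ P)

/-- The minimum eigenvalue `λ_min(P)` of a (symmetric) real matrix. -/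
noncomputable def eigMin {k : Type*} [Fintype k] [DecidableEq k]
    (P : Matrix k k ℝ) : ℝ := sInf (spectrum ℝ P)

/-- The condition number `ϖ(P) = λ_max(P)/λ_min(P)`. -/
noncomputable def varpi {k : Type*} [Fintype k] [DecidableEq k]
    (P : Matrix k k ℝ) : ℝ := eigMax P / eigMin P

/-- A complex square matrix is Hurwitz if all its eigenvalues have negative real part. -/
def IsHurwitzC {k : Type*} [Fintype k] [DecidableEq k] (A : Matrix k k ℂ) : Prop :=
  ∀ μ ∈ spectrum ℂ A, μ.re < 0

/-- A real square matrix is Hurwitz if all its (complex) eigenvalues have negative real part. -/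
def IsHurwitz {k : Type*} [Fintype k] [DecidableEq k] (A : Matrix k k ℝ) : Prop :=
  IsHurwitzC (A.map Complex.ofReal)

/-- The directed weighted graph described by the adjacency matrix `A` (edge `(i,j)` present iff
`A i j > 0`, meaning agent `i` receives information from agent `j`) contains a (directed)
spanning tree: there is a root from which every vertex is reachable along directed edges. -/
def HasSpanningTree {n : ℕ} (A : Matrix (Fin n) (Fin n) ℝ) : Prop :=
  ∃ root : Fin n, ∀ i : Fin n, Relation.ReflTransGen (fun u v => 0 < A v u) root i

/-!
In the disagreement coordinates `ζ = (W ⊗ I)σ` the closed loop reads `ζ' = A_ζ ζ + (W ⊗ BM)φ`,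
and since `L1 = 0` and `1rᵀ + UW = I` give `L = LUW`, the input is `χ = -(LU ⊗ M)ζ + (I ⊗ M)φ`.
Along trajectories `V = ζᵀQζ` satisfies
`V' = -2‖ζ‖² + 2ζᵀQ(W ⊗ BM)φ ≤ -V/λ_max(Q) + ‖Q(W ⊗ BM)‖²‖φ‖²`,
so by Grönwall, once `‖φ‖ ≤ s`, `V` ends up below `λ_max(Q)‖Q(W ⊗ BM)‖²s² + ε`; as
`λ_min(Q)‖ζ‖² ≤ V`, this is the asymptotic gain `γ_ζ` from `φ` to `ζ`, and the triangle
inequality for `χ` turns it into `γ_χ`.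
-/

open scoped Matrix.Norms.L2Operator Topology

theorem norm_sq_toLp {ι : Type*} [Fintype ι] (x : ι → ℝ) :
    ‖WithLp.toLp 2 x‖ ^ 2 = ∑ i, x i ^ 2 := by
  simp [EuclideanSpace.norm_sq_eq]

theorem dotProduct_le_norm_mul_norm {ι : Type*} [Fintype ι] (x y : ι → ℝ) :
    x ⬝ᵥ y ≤ ‖WithLp.toLp 2 x‖ * ‖WithLp.toLp 2 y‖ := by
  have := real_inner_le_norm (WithLp.toLp 2 y) (WithLp.toLp 2 x)
  rwa [EuclideanSpace.inner_toLp_toLp, star_trivial, mul_comm] at this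

section L2OpNorm

variable {k l k' l' : Type*} [Fintype k] [Fintype l] [Fintype k'] [Fintype l']
  [DecidableEq l] [DecidableEq l']

theorem opNorm_eq_l2_opNorm (A : Matrix k l ℝ) : opNorm A = ‖A‖ := rfl

theorem norm_toLp_mulVec_le (A : Matrix k l ℝ) (x : l → ℝ) :
    ‖WithLp.toLp 2 (A *ᵥ x)‖ ≤ ‖A‖ * ‖WithLp.toLp 2 x‖ :=
  (LinearMap.toContinuousLinearMap (toEuclideanLin A)).le_opNorm (WithLp.toLp 2 x)

theorem sum_sq_mulVec_le (A : Matrix k l ℝ) (x : l → ℝ) :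
    ∑ i, (A *ᵥ x) i ^ 2 ≤ ‖A‖ ^ 2 * ∑ j, x j ^ 2 := by
  rw [← norm_sq_toLp, ← norm_sq_toLp, ← mul_pow]
  exact pow_le_pow_left₀ (norm_nonneg _) (norm_toLp_mulVec_le A x) 2

theorem l2_opNorm_kronecker_le (A : Matrix k l ℝ) (B : Matrix k' l' ℝ) :
    ‖A ⊗ₖ B‖ ≤ ‖A‖ * ‖B‖ := by
  refine ContinuousLinearMap.opNorm_le_bound _ (by positivity) fun x => ?_
  rw [← sq_le_sq₀ (norm_nonneg _) (by positivity)]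
  -- `(A ⊗ₖ B) x` is `A` applied to the matrix `y j c = (B x_j)_c`, column by column
  set y : l → k' → ℝ := fun j => B *ᵥ fun d => x (j, d)
  have hcoord : ∀ i c, ((A ⊗ₖ B) *ᵥ x.ofLp) (i, c) = (A *ᵥ fun j => y j c) i := by
    intro i c
    simp only [y, mulVec, dotProduct, kroneckerMap_apply, Fintype.sum_prod_type,
      Finset.mul_sum, mul_assoc]
  calc ‖(LinearMap.toContinuousLinearMap (toEuclideanLin (A ⊗ₖ B))) x‖ ^ 2
      = ∑ c, ∑ i, (A *ᵥ fun j => y j c) i ^ 2 := by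
        simp only [LinearMap.coe_toContinuousLinearMap', toLpLin_apply]
        rw [norm_sq_toLp, Fintype.sum_prod_type, Finset.sum_comm]
        simp only [hcoord]
    _ ≤ ∑ c, ‖A‖ ^ 2 * ∑ j, y j c ^ 2 := Finset.sum_le_sum fun c _ => sum_sq_mulVec_le A _
    _ = ‖A‖ ^ 2 * ∑ j, ∑ c, y j c ^ 2 := by rw [← Finset.mul_sum, Finset.sum_comm]
    _ ≤ ‖A‖ ^ 2 * ∑ j, ‖B‖ ^ 2 * ∑ d, x (j, d) ^ 2 := by
        gcongr with j
        exact sum_sq_mulVec_le B _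
    _ = (‖A‖ * ‖B‖ * ‖x‖) ^ 2 := by
        rw [← Finset.mul_sum, ← Fintype.sum_prod_type (fun a => x a ^ 2), ← norm_sq_toLp]
        ring

theorem l2_opNorm_one_le : ‖(1 : Matrix l l ℝ)‖ ≤ 1 := by
  rw [← l2_opNorm_toEuclideanCLM, map_one]
  exact ContinuousLinearMap.norm_id_le

end L2OpNorm

theorem norm_toLp_neg_add_kronecker_mulVec_le {ι ρ κ μ : Type*} [Fintype ι] [Fintype ρ]
    [Fintype κ] [Fintype μ] [DecidableEq ι] [DecidableEq ρ] [DecidableEq κ]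
    (K : Matrix ι ρ ℝ) (M : Matrix μ κ ℝ) (z : ρ × κ → ℝ) (y : ι × κ → ℝ) :
    ‖WithLp.toLp 2 (-((K ⊗ₖ M) *ᵥ z) + ((1 : Matrix ι ι ℝ) ⊗ₖ M) *ᵥ y)‖ ≤
      ‖K‖ * ‖M‖ * ‖WithLp.toLp 2 z‖ + ‖M‖ * ‖WithLp.toLp 2 y‖ := by
  rw [WithLp.toLp_add, WithLp.toLp_neg]
  refine (norm_add_le _ _).trans (add_le_add ?_ ?_)
  · rw [norm_neg]
    exact (norm_toLp_mulVec_le _ _).trans (by gcongr; exact l2_opNorm_kronecker_le K M)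
  · refine (norm_toLp_mulVec_le _ _).trans ?_
    gcongr
    exact (l2_opNorm_kronecker_le _ _).trans
      (mul_le_of_le_one_left (norm_nonneg _) l2_opNorm_one_le)

namespace Matrix.IsHermitian

variable {τ : Type*} [Fintype τ] [DecidableEq τ] {Q : Matrix τ τ ℝ}

theorem dotProduct_mulVec_eq_sum_eigenvalues (hQ : Q.IsHermitian) (x : τ → ℝ) :
    x ⬝ᵥ (Q *ᵥ x) =
      ∑ i, hQ.eigenvalues i * inner ℝ (hQ.eigenvectorBasis i) (WithLp.toLp 2 x) ^ 2 := by
  have hsymm := isSymmetric_toEuclideanLin_iff.mpr hQ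
  have heig : ∀ i, toEuclideanLin Q (hQ.eigenvectorBasis i) =
      hQ.eigenvalues i • hQ.eigenvectorBasis i := fun i => by
    ext1
    simp [toLpLin_apply, hQ.mulVec_eigenvectorBasis i]
  have hinner : x ⬝ᵥ (Q *ᵥ x) =
      inner ℝ (WithLp.toLp 2 x) (toEuclideanLin Q (WithLp.toLp 2 x)) := by
    simp [toLpLin_apply, EuclideanSpace.inner_toLp_toLp, dotProduct_comm]
  rw [hinner, ← hQ.eigenvectorBasis.sum_inner_mul_inner]
  refine Finset.sum_congr rfl fun i _ => ?_
  rw [← hsymm, heig, real_inner_smul_left, real_inner_comm]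
  ring

theorem eigMin_le_eigenvalues (hQ : Q.IsHermitian) (i : τ) : eigMin Q ≤ hQ.eigenvalues i :=
  csInf_le finite_real_spectrum.bddBelow (hQ.eigenvalues_mem_spectrum_real i)

theorem eigenvalues_le_eigMax (hQ : Q.IsHermitian) (i : τ) : hQ.eigenvalues i ≤ eigMax Q :=
  le_csSup finite_real_spectrum.bddAbove (hQ.eigenvalues_mem_spectrum_real i)

theorem eigMin_mul_norm_sq_le (hQ : Q.IsHermitian) (x : τ → ℝ) :
    eigMin Q * ‖WithLp.toLp 2 x‖ ^ 2 ≤ x ⬝ᵥ (Q *ᵥ x) := by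
  rw [hQ.dotProduct_mulVec_eq_sum_eigenvalues, ← hQ.eigenvectorBasis.sum_sq_inner_right,
    Finset.mul_sum]
  gcongr with i
  exact hQ.eigMin_le_eigenvalues i

theorem dotProduct_mulVec_le_eigMax_mul_norm_sq (hQ : Q.IsHermitian) (x : τ → ℝ) :
    x ⬝ᵥ (Q *ᵥ x) ≤ eigMax Q * ‖WithLp.toLp 2 x‖ ^ 2 := by
  rw [hQ.dotProduct_mulVec_eq_sum_eigenvalues, ← hQ.eigenvectorBasis.sum_sq_inner_right,
    Finset.mul_sum]
  gcongr with i
  exact hQ.eigenvalues_le_eigMax i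

end Matrix.IsHermitian

theorem Matrix.PosDef.eigMin_pos {τ : Type*} [Fintype τ] [DecidableEq τ] [Nonempty τ]
    {Q : Matrix τ τ ℝ} (hQ : Q.PosDef) : 0 < eigMin Q := by
  have hne : (spectrum ℝ Q).Nonempty :=
    ⟨_, hQ.isHermitian.eigenvalues_mem_spectrum_real (Classical.arbitrary τ)⟩
  obtain ⟨i, hi⟩ : eigMin Q ∈ Set.range hQ.isHermitian.eigenvalues :=
    hQ.isHermitian.spectrum_real_eq_range_eigenvalues ▸ hne.csInf_mem finite_real_spectrum
  exact hi ▸ hQ.eigenvalues_pos i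

theorem Matrix.PosDef.eigMax_pos {τ : Type*} [Fintype τ] [DecidableEq τ] [Nonempty τ]
    {Q : Matrix τ τ ℝ} (hQ : Q.PosDef) : 0 < eigMax Q :=
  hQ.eigMin_pos.trans_le ((hQ.isHermitian.eigMin_le_eigenvalues (Classical.arbitrary τ)).trans
    (hQ.isHermitian.eigenvalues_le_eigMax _))

theorem tendsto_gronwallBound_of_neg {δ K ε : ℝ} (hK : K < 0) :
    Tendsto (gronwallBound δ K ε) atTop (𝓝 (-ε / K)) := by
  have hexp : Tendsto (fun x => Real.exp (K * x)) atTop (𝓝 0) :=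
    Real.tendsto_exp_atBot.comp (tendsto_id.const_mul_atTop_of_neg hK)
  rw [gronwallBound_of_K_ne_0 hK.ne]
  convert (hexp.const_mul δ).add ((hexp.sub_const 1).const_mul (ε / K)) using 2
  ring

theorem eventually_le_of_hasDerivAt_le_neg_mul_add {V V' : ℝ → ℝ} {a b : ℝ} (ha : 0 < a)
    (hV : ∀ᶠ t in atTop, HasDerivAt V (V' t) t ∧ V' t ≤ -a * V t + b) {ε : ℝ} (hε : 0 < ε) :
    ∀ᶠ t in atTop, V t ≤ b / a + ε := by
  obtain ⟨T, hT⟩ := eventually_atTop.mp hV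
  have hgronwall : ∀ x, T ≤ x → V x ≤ gronwallBound (V T) (-a) b (x - T) := fun x hx =>
    le_gronwallBound_of_liminf_deriv_right_le
      (fun t ht => (hT t ht.1).1.continuousAt.continuousWithinAt)
      (fun t ht _ hr => (hT t ht.1).1.hasDerivWithinAt.liminf_right_slope_le hr) le_rfl
      (fun t ht => (hT t ht.1).2) x ⟨hx, le_rfl⟩
  have hlim : Tendsto (fun x => gronwallBound (V T) (-a) b (x - T)) atTop (𝓝 (b / a)) := by
    have := (tendsto_gronwallBound_of_neg (δ := V T) (ε := b) (neg_neg_of_pos ha)).comp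
      (tendsto_atTop_add_const_right atTop (-T) tendsto_id)
    rw [neg_div_neg_eq] at this
    exact this.congr fun x => by simp [sub_eq_add_neg]
  filter_upwards [eventually_ge_atTop T,
    hlim.eventually (eventually_le_nhds (lt_add_of_pos_right (b / a) hε))] with x hx hbound
  exact (hgronwall x hx).trans hbound

/-- An `ε`-form of `limsup f ≤ C * limsup g` that composes along pointwise bounds. -/
def HasAsymptoticGain {α : Type*} (l : Filter α) (f g : α → ℝ) (C : ℝ) : Prop :=
  ∀ s, (∀ᶠ x in l, g x ≤ s) → ∀ ε > 0, ∀ᶠ x in l, f x ≤ C * s + ε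

namespace HasAsymptoticGain

variable {α : Type*} {l : Filter α} {f f' g : α → ℝ} {C : ℝ}

theorem of_le_mul_add {D K : ℝ} (hf' : HasAsymptoticGain l f' g C) (hD : 0 ≤ D) (hK : 0 ≤ K)
    (hle : ∀ᶠ x in l, f x ≤ D * f' x + K * g x) : HasAsymptoticGain l f g (D * C + K) := by
  intro s hs ε hε
  have hεD : D * (ε / (D + 1)) ≤ ε := by
    rw [mul_div_assoc', div_le_iff₀ (by positivity)]
    nlinarith
  filter_upwards [hf' s hs (ε / (D + 1)) (by positivity), hs, hle] with x hf'x hgx hfx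
  calc f x ≤ D * f' x + K * g x := hfx
    _ ≤ D * (C * s + ε / (D + 1)) + K * s := by gcongr
    _ ≤ (D * C + K) * s + ε := by nlinarith

theorem limsup_le [l.NeBot] (h : HasAsymptoticGain l f g C)
    (hf : IsCoboundedUnder (· ≤ ·) l f) (hg : IsBoundedUnder (· ≤ ·) l g) :
    limsup f l ≤ C * limsup g l := by
  have hbound : ∀ s ∈ Set.Ioi (limsup g l), limsup f l ≤ C * s := fun s hs =>
    le_of_forall_pos_le_add fun ε hε => limsup_le_of_le hf
      (h s ((eventually_lt_of_limsup_lt hs hg).mono fun _ => le_of_lt) ε hε)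
  exact ge_of_tendsto (((continuous_const_mul C).tendsto _).mono_left nhdsWithin_le_nhds)
    (eventually_nhdsWithin_of_forall hbound)

end HasAsymptoticGain

theorem HasDerivAt.matrix_mulVec {ι κ : Type*} [Fintype ι] [Fintype κ] {x : ℝ → ι → ℝ}
    {x' : ι → ℝ} {t : ℝ} (P : Matrix κ ι ℝ) (hx : HasDerivAt x x' t) :
    HasDerivAt (fun s => P *ᵥ x s) (P *ᵥ x') t :=
  (mulVecLin P).toContinuousLinearMap.hasFDerivAt.comp_hasDerivAt t hx

theorem HasDerivAt.dotProduct_mulVec {ι : Type*} [Fintype ι] {z : ℝ → ι → ℝ} {z' : ι → ℝ}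
    {t : ℝ} (Q : Matrix ι ι ℝ) (hz : HasDerivAt z z' t) :
    HasDerivAt (fun s => z s ⬝ᵥ (Q *ᵥ z s)) (z' ⬝ᵥ (Q *ᵥ z t) + z t ⬝ᵥ (Q *ᵥ z')) t := by
  simp only [dotProduct, ← Finset.sum_add_distrib]
  exact HasDerivAt.fun_sum fun i _ =>
    (hasDerivAt_pi.1 hz i).mul (hasDerivAt_pi.1 (hz.matrix_mulVec Q) i) |>.congr_deriv (by ring)

theorem lyapunov_derivative_eq {τ κ : Type*} [Fintype τ] [Fintype κ] [DecidableEq τ]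
    {Az Q : Matrix τ τ ℝ} (G : Matrix τ κ ℝ) (hQ : Q.IsHermitian)
    (hlyap : Q * Az + Azᵀ * Q = -((2 : ℝ) • 1)) (z : τ → ℝ) (w : κ → ℝ) :
    (Az *ᵥ z + G *ᵥ w) ⬝ᵥ (Q *ᵥ z) + z ⬝ᵥ (Q *ᵥ (Az *ᵥ z + G *ᵥ w)) =
      -2 * ‖WithLp.toLp 2 z‖ ^ 2 + 2 * (z ⬝ᵥ ((Q * G) *ᵥ w)) := by
  have hsymm : ∀ x, x ⬝ᵥ (Q *ᵥ z) = z ⬝ᵥ (Q *ᵥ x) := fun x => by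
    rw [dotProduct_comm, dotProduct_mulVec, ← mulVec_transpose,
      ← conjTranspose_eq_transpose_of_trivial, hQ.eq]
  have hquad : z ⬝ᵥ ((Q * Az + Azᵀ * Q) *ᵥ z) = -2 * ‖WithLp.toLp 2 z‖ ^ 2 := by
    rw [hlyap, neg_mulVec, smul_mulVec, one_mulVec, dotProduct_neg, dotProduct_smul,
      norm_sq_toLp]
    simp [dotProduct, sq]
  have hAzT : z ⬝ᵥ ((Azᵀ * Q) *ᵥ z) = z ⬝ᵥ (Q *ᵥ (Az *ᵥ z)) := by
    rw [← mulVec_mulVec, dotProduct_mulVec, vecMul_transpose, hsymm]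
  calc (Az *ᵥ z + G *ᵥ w) ⬝ᵥ (Q *ᵥ z) + z ⬝ᵥ (Q *ᵥ (Az *ᵥ z + G *ᵥ w))
      = 2 * (z ⬝ᵥ (Q *ᵥ (Az *ᵥ z)) + z ⬝ᵥ (Q *ᵥ (G *ᵥ w))) := by
        rw [hsymm, mulVec_add, dotProduct_add]
        ring
    _ = z ⬝ᵥ ((Q * Az + Azᵀ * Q) *ᵥ z) + 2 * (z ⬝ᵥ ((Q * G) *ᵥ w)) := by
        rw [add_mulVec, dotProduct_add, hAzT, ← mulVec_mulVec, ← mulVec_mulVec]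
        ring
    _ = -2 * ‖WithLp.toLp 2 z‖ ^ 2 + 2 * (z ⬝ᵥ ((Q * G) *ᵥ w)) := by rw [hquad]

theorem lyapunov_derivative_le {τ κ : Type*} [Fintype τ] [DecidableEq τ] [Fintype κ]
    [DecidableEq κ] {Q : Matrix τ τ ℝ} (hQ : Q.IsHermitian) (hmax : 0 < eigMax Q)
    (G : Matrix τ κ ℝ) (z : τ → ℝ) {w : κ → ℝ} {s : ℝ} (hw : ‖WithLp.toLp 2 w‖ ≤ s) :
    -2 * ‖WithLp.toLp 2 z‖ ^ 2 + 2 * (z ⬝ᵥ ((Q * G) *ᵥ w)) ≤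
      -(eigMax Q)⁻¹ * (z ⬝ᵥ (Q *ᵥ z)) + (‖Q * G‖ * s) ^ 2 := by
  have hcs : z ⬝ᵥ ((Q * G) *ᵥ w) ≤ ‖WithLp.toLp 2 z‖ * (‖Q * G‖ * s) :=
    (dotProduct_le_norm_mul_norm _ _).trans (by
      gcongr
      exact (norm_toLp_mulVec_le _ _).trans (mul_le_mul_of_nonneg_left hw (norm_nonneg _)))
  have hV : (eigMax Q)⁻¹ * (z ⬝ᵥ (Q *ᵥ z)) ≤ ‖WithLp.toLp 2 z‖ ^ 2 := by
    rw [inv_mul_le_iff₀ hmax]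
    exact hQ.dotProduct_mulVec_le_eigMax_mul_norm_sq z
  nlinarith [sq_nonneg (‖WithLp.toLp 2 z‖ - ‖Q * G‖ * s)]

theorem hasAsymptoticGain_of_lyapunov {τ κ : Type*} [Fintype τ] [DecidableEq τ] [Fintype κ]
    [DecidableEq κ] {Az Q : Matrix τ τ ℝ} {G : Matrix τ κ ℝ} (hQ : Q.PosDef)
    (hlyap : Q * Az + Azᵀ * Q = -((2 : ℝ) • 1)) {z : ℝ → τ → ℝ} {w : ℝ → κ → ℝ}
    (hz : ∀ᶠ t in atTop, HasDerivAt z (Az *ᵥ z t + G *ᵥ w t) t) :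
    HasAsymptoticGain atTop (fun t => ‖WithLp.toLp 2 (z t)‖) (fun t => ‖WithLp.toLp 2 (w t)‖)
      (√(varpi Q) * ‖Q * G‖) := by
  intro s hs ε hε
  have hs0 : 0 ≤ s := (norm_nonneg _).trans hs.exists.choose_spec
  rcases isEmpty_or_nonempty τ with hτ | hτ
  · filter_upwards with t
    rw [Subsingleton.elim (z t) 0, WithLp.toLp_zero, norm_zero]
    positivity
  have hmin : 0 < eigMin Q := hQ.eigMin_pos
  have hmax : 0 < eigMax Q := hQ.eigMax_pos
  set c := ‖Q * G‖ * s
  have hV : ∀ᶠ t in atTop, HasDerivAt (fun t => z t ⬝ᵥ (Q *ᵥ z t))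
      (-2 * ‖WithLp.toLp 2 (z t)‖ ^ 2 + 2 * (z t ⬝ᵥ ((Q * G) *ᵥ w t))) t ∧
      -2 * ‖WithLp.toLp 2 (z t)‖ ^ 2 + 2 * (z t ⬝ᵥ ((Q * G) *ᵥ w t)) ≤
        -(eigMax Q)⁻¹ * (z t ⬝ᵥ (Q *ᵥ z t)) + c ^ 2 := by
    filter_upwards [hz, hs] with t hzt hwt
    refine ⟨?_, lyapunov_derivative_le hQ.isHermitian hmax G (z t) hwt⟩
    rw [← lyapunov_derivative_eq G hQ.isHermitian hlyap]
    exact hzt.dotProduct_mulVec Q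
  filter_upwards [eventually_le_of_hasDerivAt_le_neg_mul_add (inv_pos.2 hmax) hV
    (mul_pos hmin (pow_pos hε 2))] with t hVt
  have hsq : ‖WithLp.toLp 2 (z t)‖ ^ 2 ≤ varpi Q * c ^ 2 + ε ^ 2 := by
    refine le_of_mul_le_mul_left ?_ hmin
    calc eigMin Q * ‖WithLp.toLp 2 (z t)‖ ^ 2 ≤ z t ⬝ᵥ (Q *ᵥ z t) :=
          hQ.isHermitian.eigMin_mul_norm_sq_le _
      _ ≤ c ^ 2 / (eigMax Q)⁻¹ + eigMin Q * ε ^ 2 := hVt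
      _ = eigMin Q * (varpi Q * c ^ 2 + ε ^ 2) := by
        rw [varpi]
        field_simp
  have hϖ : √(varpi Q) ^ 2 = varpi Q := Real.sq_sqrt (div_nonneg hmax.le hmin.le)
  have hγ : 0 ≤ √(varpi Q) * c := by positivity
  rw [mul_assoc, ← pow_le_pow_iff_left₀ (norm_nonneg _) (by positivity) two_ne_zero]
  nlinarith

/-- The paper's `col(x_1, …, x_n)`, indexed by (agent, coordinate). -/
def stack {ι κ : Type*} (x : ι → EuclideanSpace ℝ κ) : ι × κ → ℝ := fun a => x a.1 a.2

theorem norm_toLp_stack {ι κ : Type*} [Fintype ι] [Fintype κ] (x : ι → EuclideanSpace ℝ κ) :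
    ‖WithLp.toLp 2 (stack x)‖ = √(∑ i, ‖x i‖ ^ 2) := by
  rw [← Real.sqrt_sq (norm_nonneg _), norm_sq_toLp, Fintype.sum_prod_type]
  simp [stack, EuclideanSpace.norm_sq_eq]

theorem stack_toEuclideanLin {ι κ μ : Type*} [Fintype ι] [Fintype κ] [DecidableEq ι]
    [DecidableEq κ] (M : Matrix μ κ ℝ) (x : ι → EuclideanSpace ℝ κ) :
    stack (fun i => toEuclideanLin M (x i)) = ((1 : Matrix ι ι ℝ) ⊗ₖ M) *ᵥ stack x := by
  ext ⟨i, c⟩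
  simp [stack, toLpLin_apply, mulVec, dotProduct, Fintype.sum_prod_type, one_apply]

theorem stack_smul_sub_sum {ι κ : Type*} [Fintype ι] [Fintype κ] [DecidableEq ι]
    [DecidableEq κ] (A : Matrix ι ι ℝ) (x : ι → EuclideanSpace ℝ κ) :
    stack (fun i => ∑ j, A i j • (x i - x j)) =
      ((diagonal fun i => ∑ j, A i j) - A) ⊗ₖ (1 : Matrix κ κ ℝ) *ᵥ stack x := by
  ext ⟨i, c⟩
  simp [stack, mulVec, dotProduct, Fintype.sum_prod_type, one_apply, diagonal_apply, sub_mul,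
    mul_sub, Finset.sum_sub_distrib, Finset.sum_mul]

theorem hasDerivAt_stack {ι κ : Type*} [Fintype ι] [Fintype κ]
    {x : ι → ℝ → EuclideanSpace ℝ κ} {x' : ι → EuclideanSpace ℝ κ} {t : ℝ}
    (hx : ∀ i, HasDerivAt (x i) (x' i) t) :
    HasDerivAt (fun s => stack fun i => x i s) (stack x') t :=
  hasDerivAt_pi.2 fun a =>
    (EuclideanSpace.proj a.2 : EuclideanSpace ℝ κ →L[ℝ] ℝ).hasFDerivAt.comp_hasDerivAt t (hx a.1)

theorem stack_add {ι κ : Type*} (x y : ι → EuclideanSpace ℝ κ) :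
    stack (fun i => x i + y i) = stack x + stack y := rfl

section Laplacian

variable {ι ρ : Type*} [Fintype ι] [Fintype ρ] [DecidableEq ι] {A L : Matrix ι ι ℝ}

theorem eq_diagonal_sub_of_laplacian (hdiag : ∀ i, L i i = ∑ j, A i j)
    (hoff : ∀ i j, i ≠ j → L i j = -A i j) (hrow : L *ᵥ 1 = 0) :
    L = diagonal (fun i => ∑ j, A i j) - A := by
  have hA : ∀ i, A i i = 0 := fun i => by
    have h : ∑ j, L i j = 0 := by simpa [mulVec, dotProduct] using congrFun hrow i
    rw [← Finset.add_sum_erase _ _ (Finset.mem_univ i), hdiag,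
      Finset.sum_congr rfl fun j hj => hoff i j (Finset.ne_of_mem_erase hj).symm,
      Finset.sum_neg_distrib, ← Finset.add_sum_erase _ _ (Finset.mem_univ i)] at h
    simpa using h
  ext i j
  rcases eq_or_ne i j with rfl | hij
  · simp [hdiag, hA]
  · simp [hoff i j hij, hij]

theorem mul_mul_eq_self_of_mulVec_eq_zero {U : Matrix ι ρ ℝ} {W : Matrix ρ ι ℝ} {r v : ι → ℝ}
    (hv : L *ᵥ v = 0) (hT : vecMulVec v r + U * W = 1) : L * U * W = L := by
  calc L * U * W = L * (vecMulVec v r + U * W) := by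
        simp [Matrix.mul_add, mul_vecMulVec, hv, Matrix.mul_assoc]
    _ = L := by rw [hT, Matrix.mul_one]

end Laplacian

section ConsensusError

variable {ι ρ κ μ : Type*} [Fintype ι] [Fintype ρ] [Fintype κ] [DecidableEq ι] [DecidableEq κ]
  {A L : Matrix ι ι ℝ} {U : Matrix ι ρ ℝ} {W : Matrix ρ ι ℝ}

theorem stack_consensus_input (hL : L = diagonal (fun i => ∑ j, A i j) - A)
    (hLUW : L * U * W = L) (M : Matrix μ κ ℝ) {σ φ : ι → EuclideanSpace ℝ κ}
    {χ : ι → EuclideanSpace ℝ μ}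
    (hχ : ∀ i, χ i = -(toEuclideanLin M (∑ j, A i j • (σ i - σ j)))
      + toEuclideanLin M (φ i)) :
    stack χ = -(((L * U) ⊗ₖ M) *ᵥ ((W ⊗ₖ (1 : Matrix κ κ ℝ)) *ᵥ stack σ))
      + ((1 : Matrix ι ι ℝ) ⊗ₖ M) *ᵥ stack φ := by
  have hsplit : stack χ = -stack (fun i => toEuclideanLin M (∑ j, A i j • (σ i - σ j)))
      + stack (fun i => toEuclideanLin M (φ i)) := by
    ext a
    simp [stack, hχ]
  rw [hsplit, stack_toEuclideanLin, stack_toEuclideanLin, stack_smul_sub_sum, ← hL,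
    mulVec_mulVec, mulVec_mulVec, ← mul_kronecker_mul, ← mul_kronecker_mul, Matrix.one_mul,
    Matrix.mul_one, hLUW]

theorem hasDerivAt_consensus_error [DecidableEq ρ] [Fintype μ] [DecidableEq μ]
    {S : Matrix κ κ ℝ} {B : Matrix κ μ ℝ} {M : Matrix μ κ ℝ}
    {σ : ι → ℝ → EuclideanSpace ℝ κ} {χ : ι → EuclideanSpace ℝ μ} {y : ι × κ → ℝ} {t : ℝ}
    (hσ : ∀ i, HasDerivAt (σ i)
      (toEuclideanLin S (σ i t) + toEuclideanLin B (χ i)) t)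
    (hχ : stack χ = -(((L * U) ⊗ₖ M) *ᵥ ((W ⊗ₖ (1 : Matrix κ κ ℝ)) *ᵥ stack fun i => σ i t))
      + ((1 : Matrix ι ι ℝ) ⊗ₖ M) *ᵥ y) :
    HasDerivAt (fun s => (W ⊗ₖ (1 : Matrix κ κ ℝ)) *ᵥ stack fun i => σ i s)
      (((1 : Matrix ρ ρ ℝ) ⊗ₖ S - (W * L * U) ⊗ₖ (B * M)) *ᵥ
          ((W ⊗ₖ (1 : Matrix κ κ ℝ)) *ᵥ stack fun i => σ i t) + (W ⊗ₖ (B * M)) *ᵥ y) t := by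
  refine ((hasDerivAt_stack hσ).matrix_mulVec (W ⊗ₖ (1 : Matrix κ κ ℝ))).congr_deriv ?_
  rw [stack_add, stack_toEuclideanLin, stack_toEuclideanLin, hχ, sub_mulVec]
  simp only [mulVec_add, mulVec_neg, mulVec_mulVec, ← mul_kronecker_mul,
    Matrix.one_mul, Matrix.mul_one, Matrix.mul_assoc]
  abel

end ConsensusError

theorem isBoundedUnder_sqrt_sum_sq_norm {ι E : Type*} [Fintype ι] [SeminormedAddCommGroup E]
    {φ : ι → ℝ → E} {c : ℝ} (hc : ∀ i t, 0 ≤ t → ‖φ i t‖ ≤ c) :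
    IsBoundedUnder (· ≤ ·) atTop (fun t => √(∑ i, ‖φ i t‖ ^ 2)) :=
  isBoundedUnder_of_eventually_le (a := √(∑ _i : ι, c ^ 2)) <|
    (eventually_ge_atTop 0).mono fun t ht => Real.sqrt_le_sqrt <|
      Finset.sum_le_sum fun i _ => pow_le_pow_left₀ (norm_nonneg _) (hc i t ht) 2

theorem stmt1_general (n p m : ℕ)
    (S : Matrix (Fin p) (Fin p) ℝ) (B : Matrix (Fin p) (Fin m) ℝ)
    (M : Matrix (Fin m) (Fin p) ℝ)
    -- the weighted digraph: adjacency matrix, Laplacian, and spanning tree assumption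
    (A : Matrix (Fin n) (Fin n) ℝ)
    (L : Matrix (Fin n) (Fin n) ℝ)
    (hLdiag : ∀ i, L i i = ∑ j, A i j) (hLoff : ∀ i j, i ≠ j → L i j = -A i j)
    -- `r` and `1` are left/right eigenvectors of `L` for the eigenvalue `0` with `rᵀ1 = 1`
    (r onev : Fin n → ℝ) (hone : onev = fun _ => 1)
    (hL1 : L *ᵥ onev = 0)
    -- `W`, `U`: `T = [rᵀ; W]` is invertible with `T⁻¹ = [1 U]`; `H = WLU`
    (W : Matrix (Fin (n - 1)) (Fin n) ℝ) (U : Matrix (Fin n) (Fin (n - 1)) ℝ)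
    (hTinv : Matrix.vecMulVec onev r + U * W = 1)
    -- `Q = Qᵀ > 0` solves the Lyapunov equation `QA_ζ + A_ζᵀQ = −2I`
    (Q : Matrix ((Fin (n - 1)) × Fin p) ((Fin (n - 1)) × Fin p) ℝ)
    (hQpos : Q.PosDef)
    (hQlyap : Q * ((1 : Matrix (Fin (n - 1)) (Fin (n - 1)) ℝ) ⊗ₖ S - (W * L * U) ⊗ₖ (B * M))
      + ((1 : Matrix (Fin (n - 1)) (Fin (n - 1)) ℝ) ⊗ₖ S - (W * L * U) ⊗ₖ (B * M))ᵀ * Q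
      = -((2 : ℝ) • (1 : Matrix ((Fin (n - 1)) × Fin p) ((Fin (n - 1)) × Fin p) ℝ)))
    -- trajectories: external perturbation `φ` (bounded), controller `χ`, agents `σ`
    (φ : Fin n → ℝ → EuclideanSpace ℝ (Fin p))
    (hφb : ∃ c : ℝ, ∀ i t, 0 ≤ t → ‖φ i t‖ ≤ c)
    (σ : Fin n → ℝ → EuclideanSpace ℝ (Fin p))
    (χ : Fin n → ℝ → EuclideanSpace ℝ (Fin m))
    (hχ : ∀ i t, χ i t
      = -(Matrix.toEuclideanLin M (∑ j, A i j • (σ i t - σ j t)))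
        + Matrix.toEuclideanLin M (φ i t))
    (hσ : ∀ i t, 0 ≤ t → HasDerivAt (σ i)
      (Matrix.toEuclideanLin S (σ i t) + Matrix.toEuclideanLin B (χ i t)) t) :
    limsup (fun t => Real.sqrt (∑ i, ‖χ i t‖ ^ 2)) atTop ≤
      opNorm M * (opNorm (L * U) *
          (Real.sqrt (varpi Q) * opNorm (Q * (W ⊗ₖ (B * M)))) + 1) *
        limsup (fun t => Real.sqrt (∑ i, ‖φ i t‖ ^ 2)) atTop := by
  subst hone
  set z : ℝ → Fin (n - 1) × Fin p → ℝ :=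
    fun t => (W ⊗ₖ (1 : Matrix (Fin p) (Fin p) ℝ)) *ᵥ stack fun i => σ i t
  have hLUW := mul_mul_eq_self_of_mulVec_eq_zero hL1 hTinv
  have hinput : ∀ t, stack (fun i => χ i t) = -(((L * U) ⊗ₖ M) *ᵥ z t)
      + ((1 : Matrix (Fin n) (Fin n) ℝ) ⊗ₖ M) *ᵥ stack fun i => φ i t := fun t =>
    stack_consensus_input (eq_diagonal_sub_of_laplacian hLdiag hLoff hL1) hLUW M (hχ · t)
  have hz : ∀ᶠ t in atTop, HasDerivAt z
      (((1 : Matrix (Fin (n - 1)) (Fin (n - 1)) ℝ) ⊗ₖ S - (W * L * U) ⊗ₖ (B * M)) *ᵥ z t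
        + (W ⊗ₖ (B * M)) *ᵥ stack fun i => φ i t) t :=
    (eventually_ge_atTop 0).mono fun t ht => hasDerivAt_consensus_error (hσ · t ht) (hinput t)
  have hgain_z := hasAsymptoticGain_of_lyapunov hQpos hQlyap hz
  simp only [norm_toLp_stack] at hgain_z
  have hgain : HasAsymptoticGain atTop (fun t => √(∑ i, ‖χ i t‖ ^ 2))
      (fun t => √(∑ i, ‖φ i t‖ ^ 2))
      (‖L * U‖ * ‖M‖ * (√(varpi Q) * ‖Q * (W ⊗ₖ (B * M))‖) + ‖M‖) :=
    hgain_z.of_le_mul_add (by positivity) (norm_nonneg _) (Eventually.of_forall fun t => by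
      rw [← norm_toLp_stack, ← norm_toLp_stack, hinput]
      exact norm_toLp_neg_add_kronecker_mulVec_le _ _ _ _)
  obtain ⟨c, hc⟩ := hφb
  convert hgain.limsup_le (isCoboundedUnder_le_of_le atTop fun t => Real.sqrt_nonneg _)
    (isBoundedUnder_sqrt_sum_sq_norm hc) using 2
  simp only [opNorm_eq_l2_opNorm]
  ring

/-- **Lemma 2** (perturbed consensus): for the agents `σ_i' = Sσ_i + Bχ_i` with controller
`χ_i = −M Σ_j a_{ij}(σ_i − σ_j) + Mφ_i`, if the graph has a spanning tree and
`A_ζ = I_{n−1} ⊗ S − H ⊗ BM` is Hurwitz, then `limsup‖χ‖ ≤ γ_χ · limsup‖φ‖` for any bounded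
`φ`, where `γ_χ = ‖M‖(‖LU‖γ_ζ + 1)` and `γ_ζ = √(ϖ(Q))‖Q(W ⊗ BM)‖`, with `Q = Qᵀ > 0` the
solution of `QA_ζ + A_ζᵀQ = −2I`. -/
theorem stmt1 (n p m : ℕ)
    (S : Matrix (Fin p) (Fin p) ℝ) (B : Matrix (Fin p) (Fin m) ℝ)
    (M : Matrix (Fin m) (Fin p) ℝ)
    -- the weighted digraph: adjacency matrix, Laplacian, and spanning tree assumption
    (A : Matrix (Fin n) (Fin n) ℝ) (hA : ∀ i j, 0 ≤ A i j)
    (hspan : HasSpanningTree A)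
    (L : Matrix (Fin n) (Fin n) ℝ)
    (hLdiag : ∀ i, L i i = ∑ j, A i j) (hLoff : ∀ i j, i ≠ j → L i j = -A i j)
    -- `r` and `1` are left/right eigenvectors of `L` for the eigenvalue `0` with `rᵀ1 = 1`
    (r onev : Fin n → ℝ) (hone : onev = fun _ => 1)
    (hrL : Matrix.vecMul r L = 0) (hL1 : L *ᵥ onev = 0) (hr1 : r ⬝ᵥ onev = 1)
    -- `W`, `U`: `T = [rᵀ; W]` is invertible with `T⁻¹ = [1 U]`; `H = WLU`
    (W : Matrix (Fin (n - 1)) (Fin n) ℝ) (U : Matrix (Fin n) (Fin (n - 1)) ℝ)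
    (hW1 : W *ᵥ onev = 0) (hrU : Matrix.vecMul r U = 0)
    (hWU : W * U = 1) (hTinv : Matrix.vecMulVec onev r + U * W = 1)
    -- `M` is selected such that `A_ζ = I_{n−1} ⊗ S − H ⊗ BM` is Hurwitz
    (hHur : IsHurwitz ((1 : Matrix (Fin (n - 1)) (Fin (n - 1)) ℝ) ⊗ₖ S
      - (W * L * U) ⊗ₖ (B * M)))
    -- `Q = Qᵀ > 0` solves the Lyapunov equation `QA_ζ + A_ζᵀQ = −2I`
    (Q : Matrix ((Fin (n - 1)) × Fin p) ((Fin (n - 1)) × Fin p) ℝ)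
    (hQsymm : Q.IsSymm) (hQpos : Q.PosDef)
    (hQlyap : Q * ((1 : Matrix (Fin (n - 1)) (Fin (n - 1)) ℝ) ⊗ₖ S - (W * L * U) ⊗ₖ (B * M))
      + ((1 : Matrix (Fin (n - 1)) (Fin (n - 1)) ℝ) ⊗ₖ S - (W * L * U) ⊗ₖ (B * M))ᵀ * Q
      = -((2 : ℝ) • (1 : Matrix ((Fin (n - 1)) × Fin p) ((Fin (n - 1)) × Fin p) ℝ)))
    -- trajectories: external perturbation `φ` (bounded), controller `χ`, agents `σ`
    (φ : Fin n → ℝ → EuclideanSpace ℝ (Fin p))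
    (hφb : ∃ c : ℝ, ∀ i t, 0 ≤ t → ‖φ i t‖ ≤ c)
    (σ : Fin n → ℝ → EuclideanSpace ℝ (Fin p))
    (χ : Fin n → ℝ → EuclideanSpace ℝ (Fin m))
    (hχ : ∀ i t, χ i t
      = -(Matrix.toEuclideanLin M (∑ j, A i j • (σ i t - σ j t)))
        + Matrix.toEuclideanLin M (φ i t))
    (hσ : ∀ i t, 0 ≤ t → HasDerivAt (σ i)
      (Matrix.toEuclideanLin S (σ i t) + Matrix.toEuclideanLin B (χ i t)) t) :
    limsup (fun t => Real.sqrt (∑ i, ‖χ i t‖ ^ 2)) atTop ≤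
      opNorm M * (opNorm (L * U) *
          (Real.sqrt (varpi Q) * opNorm (Q * (W ⊗ₖ (B * M)))) + 1) *
        limsup (fun t => Real.sqrt (∑ i, ‖φ i t‖ ^ 2)) atTop :=
  stmt1_general n p m S B M A L hLdiag hLoff r onev hone hL1 W U hTinv Q hQpos hQlyap φ hφb σ χ hχ
    hσ
end

section
/- Let S = [[0, ς], [−ς, 0]] with ς > 0, E = [1 0], and B = [1; 1]. Then for any constant γ_o > 0, there exist a matrix K_o ∈ ℝ^{2×1} and a symmetric positive definite matrix P ∈ ℝ^{2×2} such that P(S − K_oE) + (S − K_oE)ᵀP = −I and ‖PB‖·√(ϖ(P)) < γ_o. (Corollary 1 of the paper.) -/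
/-!
Take `P = [[t, -d], [-d, t]]` with `d = 1/(2ς)` and `t > d`. Its eigenvalues are `t ∓ d`,
`PB = (t - d) B`, and the Lyapunov equation holds for `K_o = (t² - d²)⁻¹ [t; d]`. Hence
`‖PB‖ √ϖ(P) ≤ √2 (t - d) √((t + d)/(t - d)) = √(2 (t² - d²))`, which is below `γ_o` as soon
as `t` is close enough to `d`.
-/

open Filter Matrix Kronecker

lemma opNorm_le_norm_col {k : Type*} [Fintype k] (A : Matrix k (Fin 1) ℝ) :
    opNorm A ≤ ‖WithLp.toLp 2 (fun i => A i 0)‖ := by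
  refine ContinuousLinearMap.opNorm_le_bound _ (norm_nonneg _) fun x => ?_
  have hAx : A *ᵥ x.ofLp = x 0 • fun i => A i 0 := by
    ext i; simp [Matrix.mulVec, dotProduct, mul_comm]
  have hx : ‖x‖ = ‖x 0‖ := by simp [EuclideanSpace.norm_eq, Real.sqrt_sq_eq_abs]
  rw [LinearMap.coe_toContinuousLinearMap', toLpLin_apply, hAx, WithLp.toLp_smul,
    norm_smul, hx, mul_comm]

lemma norm_toLp_const_fin_two (a : ℝ) :
    ‖WithLp.toLp 2 (fun _ : Fin 2 => a)‖ = Real.sqrt 2 * |a| := by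
  rw [EuclideanSpace.norm_eq, Fin.sum_univ_two, Real.norm_eq_abs, sq_abs, ← two_mul,
    Real.sqrt_mul zero_le_two, Real.sqrt_sq_eq_abs]

section SymmetricFinTwo

variable {t d : ℝ}

lemma spectrum_fin_two_symm :
    spectrum ℝ !![t, -d; -d, t] = {t - d, t + d} := by
  ext μ
  have hdet : (!![μ, 0; 0, μ] - !![t, -d; -d, t]).det = (μ - (t - d)) * (μ - (t + d)) := by
    rw [Matrix.det_fin_two]
    simp only [Fin.isValue, Matrix.sub_apply, of_apply, cons_val', cons_val_zero,
      cons_val_fin_one, cons_val_one]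
    ring
  rw [spectrum.mem_iff, Matrix.isUnit_iff_isUnit_det, isUnit_iff_ne_zero, not_not,
    Algebra.algebraMap_eq_smul_one, Matrix.smul_one_eq_diagonal, Matrix.diagonal_fin_two, hdet,
    mul_eq_zero, sub_eq_zero, sub_eq_zero, Set.mem_insert_iff, Set.mem_singleton_iff]

lemma varpi_fin_two_symm (hd : 0 ≤ d) :
    varpi !![t, -d; -d, t] = (t + d) / (t - d) := by
  have hle : t - d ≤ t + d := by linarith
  rw [varpi, eigMax, eigMin, spectrum_fin_two_symm, csSup_pair, csInf_pair,
    sup_eq_right.mpr hle, inf_eq_left.mpr hle]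

lemma posDef_fin_two_symm (h : |d| < t) :
    (!![t, -d; -d, t] : Matrix (Fin 2) (Fin 2) ℝ).PosDef := by
  rw [Matrix.posDef_iff_dotProduct_mulVec]
  refine ⟨by ext i j; fin_cases i <;> fin_cases j <;> rfl, fun x hx => ?_⟩
  have hx : 0 < x 0 ^ 2 + x 1 ^ 2 := by
    obtain ⟨i, hi⟩ := Function.ne_iff.mp hx
    fin_cases i
    · exact add_pos_of_pos_of_nonneg (sq_pos_of_ne_zero hi) (sq_nonneg _)
    · exact add_pos_of_nonneg_of_pos (sq_nonneg _) (sq_pos_of_ne_zero hi)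
  have hxy : 2 * (d * (x 0 * x 1)) ≤ |d| * (x 0 ^ 2 + x 1 ^ 2) := by
    rcases abs_cases d with ⟨hd, _⟩ | ⟨hd, _⟩ <;> rw [hd]
    · nlinarith [sq_nonneg (x 0 - x 1)]
    · nlinarith [sq_nonneg (x 0 + x 1)]
  have hquad : star x ⬝ᵥ (!![t, -d; -d, t] *ᵥ x) =
      t * (x 0 ^ 2 + x 1 ^ 2) - 2 * (d * (x 0 * x 1)) := by
    simp only [dotProduct, mulVec, Pi.star_apply, star_trivial, of_apply, cons_val',
      cons_val_fin_one, Fin.sum_univ_two, Fin.isValue, cons_val_zero, cons_val_one]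
    ring
  rw [hquad]
  nlinarith

lemma lyapunov_fin_two_symm {ς c : ℝ} (hdς : d * ς = 1 / 2) (hc : c * (t ^ 2 - d ^ 2) = 1) :
    !![t, -d; -d, t] * (!![0, ς; -ς, 0] - !![c * t; c * d] * !![(1 : ℝ), 0]) +
      (!![0, ς; -ς, 0] - !![c * t; c * d] * !![(1 : ℝ), 0])ᵀ * !![t, -d; -d, t] = -1 := by
  rw [one_fin_two]
  ext i j
  fin_cases i <;> fin_cases j <;>
    simp only [Matrix.add_apply, Matrix.mul_apply, Fin.sum_univ_two, Fin.sum_univ_one,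
      transpose_apply, Matrix.sub_apply, Matrix.neg_apply, of_apply, cons_val', cons_val_zero,
      cons_val_one, cons_val_fin_one, Fin.isValue, Fin.zero_eta, Fin.mk_one]
  · linear_combination -2 * hc + 2 * hdς
  · ring
  · ring
  · linear_combination -2 * hdς

lemma opNorm_mul_sqrt_varpi_fin_two_symm (hd : 0 ≤ d) (htd : d < t) :
    opNorm (!![t, -d; -d, t] * !![(1 : ℝ); 1]) * Real.sqrt (varpi !![t, -d; -d, t]) ≤
      Real.sqrt (2 * (t ^ 2 - d ^ 2)) := by
  have hPB : ∀ i, (!![t, -d; -d, t] * !![(1 : ℝ); 1]) i 0 = t - d := by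
    intro i
    fin_cases i <;>
      simp only [Matrix.mul_apply, Fin.sum_univ_two, of_apply, cons_val', cons_val_fin_one,
        cons_val_zero, cons_val_one, Fin.isValue, Fin.zero_eta, Fin.mk_one, mul_one] <;> ring
  have hnorm : opNorm (!![t, -d; -d, t] * !![(1 : ℝ); 1]) ≤ Real.sqrt 2 * (t - d) := by
    calc _ ≤ _ := opNorm_le_norm_col _
      _ = Real.sqrt 2 * (t - d) := by
        simp_rw [hPB]
        rw [norm_toLp_const_fin_two, abs_of_pos (by linarith)]
  calc _ ≤ Real.sqrt 2 * (t - d) * Real.sqrt ((t + d) / (t - d)) := by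
        rw [varpi_fin_two_symm hd]
        gcongr
    _ = Real.sqrt (2 * (t ^ 2 - d ^ 2)) := by
        have hsplit : 2 * (t ^ 2 - d ^ 2) = 2 * (t - d) ^ 2 * ((t + d) / (t - d)) := by
          field_simp [(by linarith : t - d ≠ 0)]
          ring
        rw [hsplit, Real.sqrt_mul (by positivity), Real.sqrt_mul zero_le_two,
          Real.sqrt_sq (by linarith)]

end SymmetricFinTwo

/-- **Corollary 1**: for `S = [[0, ς], [−ς, 0]]`, `E = [1 0]`, `B = [1; 1]` and any `γ_o > 0`,
there exist `K_o` and `P = Pᵀ > 0` with `P(S − K_oE) + (S − K_oE)ᵀP = −I` and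
`‖PB‖·√(ϖ(P)) < γ_o`. -/
theorem stmt3 (ς : ℝ) (hς : 0 < ς) (γo : ℝ) (hγo : 0 < γo) :
    ∃ (Ko : Matrix (Fin 2) (Fin 1) ℝ) (P : Matrix (Fin 2) (Fin 2) ℝ),
      P.IsSymm ∧ P.PosDef ∧
      P * (!![0, ς; -ς, 0] - Ko * !![(1 : ℝ), 0]) +
        (!![0, ς; -ς, 0] - Ko * !![(1 : ℝ), 0])ᵀ * P = -1 ∧
      opNorm (P * !![(1 : ℝ); 1]) * Real.sqrt (varpi P) < γo := by
  set d := (2 * ς)⁻¹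
  set t := Real.sqrt (d ^ 2 + γo ^ 2 / 4)
  have hd : 0 < d := by positivity
  have hgap : t ^ 2 - d ^ 2 = γo ^ 2 / 4 := by
    rw [Real.sq_sqrt (by positivity)]
    ring
  have htd : d < t := Real.lt_sqrt_of_sq_lt (by linarith [sq_pos_of_pos hγo])
  have hP := posDef_fin_two_symm (abs_of_pos hd ▸ htd)
  have hdς : d * ς = 1 / 2 := by
    simp only [d]
    field_simp
  have hc : (t ^ 2 - d ^ 2)⁻¹ * (t ^ 2 - d ^ 2) = 1 := inv_mul_cancel₀ (by rw [hgap]; positivity)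
  refine ⟨!![(t ^ 2 - d ^ 2)⁻¹ * t; (t ^ 2 - d ^ 2)⁻¹ * d], _,
    isHermitian_iff_isSymm.mp hP.isHermitian, hP, lyapunov_fin_two_symm hdς hc, ?_⟩
  refine (opNorm_mul_sqrt_varpi_fin_two_symm hd.le htd).trans_lt ?_
  rw [Real.sqrt_lt' hγo, hgap]
  linarith [sq_pos_of_pos hγo]
end

section
/- Let S ∈ ℝ^{p×p}, B ∈ ℝ^{p×m}, and suppose G = Gᵀ > 0 is a solution of the algebraic Riccati equation SᵀG + GS − λ*·GBBᵀG + εI = 0 for some constants λ* > 0 and ε > 0. Let M = BᵀG/2. Then for every complex number λ with Re λ ≥ λ*, all eigenvalues of S − λBM have strictly negative real parts; consequently, if H ∈ ℝ^{(n−1)×(n−1)} is a matrix all of whose eigenvalues λ_i satisfy Re λ_i ≥ λ*, then A_ζ = I_{n−1} ⊗ S − H ⊗ BM is Hurwitz. (Remark following Lemma 2 of the paper.) -/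
/-!
With `A = S - λ B M`, the Riccati equation makes `G` a Lyapunov matrix for `A`:
`-(Aᴴ G + G A) = ε I + (Re λ - λ*) (Bᵀ G)ᴴ (Bᵀ G)`, which is positive definite once `Re λ ≥ λ*`,
so every eigenvalue of `A` has negative real part.

An eigenvector of `I ⊗ S - H ⊗ C` (here `C = B M`) for the eigenvalue `μ` is the vectorisation of a
nonzero matrix `W` with `(S - μ I) W = C W Hᵀ`. If no `S - r C`, `r` an eigenvalue of `H`, had the
eigenvalue `μ`, each such `r` would give `W = T W (Hᵀ - r I)`; chaining these over the roots of the
characteristic polynomial of `H` yields `W = E W χ_H(Hᵀ) = 0` by Cayley–Hamilton.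
-/

open Filter Matrix Kronecker

open scoped ComplexOrder

namespace Matrix

section Field

variable {n q K : Type*} [Fintype n] [DecidableEq n] [Field K]

theorem exists_mulVec_eq_smul_of_mem_spectrum {A : Matrix n n K} {μ : K}
    (hμ : μ ∈ spectrum K A) : ∃ v ≠ 0, A *ᵥ v = μ • v := by
  rw [← spectrum_toLin', ← Module.End.hasEigenvalue_iff_mem_spectrum] at hμ
  obtain ⟨v, hv⟩ := hμ.exists_hasEigenvector
  exact ⟨v, hv.2, by simpa using hv.apply_eq_smul⟩

theorem spectrum_transpose (A : Matrix n n K) : spectrum K Aᵀ = spectrum K A := by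
  ext r
  rw [mem_spectrum_iff_isRoot_charpoly, mem_spectrum_iff_isRoot_charpoly, charpoly_transpose]

variable [Fintype q] [DecidableEq q]

theorem eq_zero_of_mul_eq_mul_mul_of_isUnit {S C : Matrix n n K} {X : Matrix q q K}
    {W : Matrix n q K} (hX : X.charpoly.Splits) (hW : S * W = C * W * X)
    (hunit : ∀ r ∈ spectrum K X, IsUnit (S - r • C)) : W = 0 := by
  have hstep : ∀ r ∈ spectrum K X, ∃ T : Matrix n n K, W = T * W * (X - r • 1) := by
    intro r hr
    obtain ⟨u, hu⟩ := hunit r hr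
    have hshift : (S - r • C) * W = C * W * (X - r • 1) := by
      rw [Matrix.sub_mul, Matrix.mul_sub, hW, Matrix.smul_mul, Matrix.mul_smul, Matrix.mul_one]
    refine ⟨(↑u⁻¹ : Matrix n n K) * C, ?_⟩
    calc W = (↑u⁻¹ : Matrix n n K) * ((S - r • C) * W) := by
          rw [← hu, ← Matrix.mul_assoc, u.inv_mul, Matrix.one_mul]
      _ = (↑u⁻¹ : Matrix n n K) * C * W * (X - r • 1) := by
          rw [hshift]; simp only [Matrix.mul_assoc]
  have hprod : ∀ s : Multiset K, (∀ r ∈ s, r ∈ spectrum K X) → ∃ E : Matrix n n K,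
      W = E * W * Polynomial.aeval X (s.map fun r => Polynomial.X - Polynomial.C r).prod := by
    intro s
    induction s using Multiset.induction_on with
    | empty => exact fun _ => ⟨1, by simp⟩
    | cons r s ih =>
      intro hs
      obtain ⟨E, hE⟩ := ih fun x hx => hs x (Multiset.mem_cons_of_mem hx)
      obtain ⟨T, hT⟩ := hstep r (hs r (Multiset.mem_cons_self r s))
      refine ⟨E * T, ?_⟩
      rw [Multiset.map_cons, Multiset.prod_cons, map_mul, map_sub, Polynomial.aeval_X,
        Polynomial.aeval_C, Algebra.algebraMap_eq_smul_one]
      generalize Polynomial.aeval X (s.map fun r => Polynomial.X - Polynomial.C r).prod = P at hE ⊢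
      calc W = E * W * P := hE
        _ = E * (T * W * (X - r • 1)) * P := by rw [← hT]
        _ = E * T * W * ((X - r • 1) * P) := by simp only [Matrix.mul_assoc]
  obtain ⟨E, hE⟩ := hprod X.charpoly.roots fun r hr =>
    mem_spectrum_iff_isRoot_charpoly.2 (Polynomial.isRoot_of_mem_roots hr)
  rwa [← hX.eq_prod_roots_of_monic X.charpoly_monic, aeval_self_charpoly, Matrix.mul_zero] at hE

theorem exists_mem_spectrum_of_mem_spectrum_one_kronecker_sub {S C : Matrix n n K}
    {H : Matrix q q K} (hH : H.charpoly.Splits) {μ : K}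
    (hμ : μ ∈ spectrum K ((1 : Matrix q q K) ⊗ₖ S - H ⊗ₖ C)) :
    ∃ r ∈ spectrum K H, μ ∈ spectrum K (S - r • C) := by
  by_contra! hnot
  obtain ⟨v, hv, hAv⟩ := exists_mulVec_eq_smul_of_mem_spectrum hμ
  set W : Matrix n q K := of fun i j => v (j, i)
  have hvW : v = vec W := rfl
  have hW : (S - μ • 1) * W = C * W * Hᵀ := by
    rw [hvW, sub_mulVec, kronecker_mulVec_vec, kronecker_mulVec_vec, transpose_one, Matrix.mul_one,
      ← vec_smul, ← vec_sub, vec_inj] at hAv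
    rw [Matrix.sub_mul, Matrix.smul_mul, Matrix.one_mul, ← hAv]
    abel
  refine hv (vec_eq_zero_iff.2 (eq_zero_of_mul_eq_mul_mul_of_isUnit ?_ hW fun r hr => ?_))
  · rwa [charpoly_transpose]
  · rw [spectrum_transpose] at hr
    have := spectrum.notMem_iff.1 (hnot r hr)
    rw [Algebra.algebraMap_eq_smul_one, ← neg_sub, IsUnit.neg_iff] at this
    convert this using 1
    abel

end Field

theorem map_kronecker {l l' m m' α β : Type*} [Mul α] [Mul β] (f : α → β)
    (hf : ∀ a b, f (a * b) = f a * f b) (A : Matrix l l' α) (B : Matrix m m' α) :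
    (A ⊗ₖ B).map f = A.map f ⊗ₖ B.map f := by
  ext; exact hf _ _

theorem transpose_map_ofRealHom {m n : Type*} (X : Matrix m n ℝ) :
    Xᵀ.map Complex.ofRealHom = (X.map Complex.ofRealHom)ᴴ := by
  ext; simp

section OfReal

variable {n : Type*} [Fintype n]

theorem IsSymm.star_dotProduct_map_ofReal_mulVec {G : Matrix n n ℝ} (hG : G.IsSymm)
    (v : n → ℂ) :
    star v ⬝ᵥ (G.map Complex.ofReal *ᵥ v) =
      ((Complex.re ∘ v) ⬝ᵥ (G *ᵥ (Complex.re ∘ v)) +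
        (Complex.im ∘ v) ⬝ᵥ (G *ᵥ (Complex.im ∘ v)) : ℝ) := by
  have hswap : (Complex.im ∘ v) ⬝ᵥ (G *ᵥ (Complex.re ∘ v)) =
      (Complex.re ∘ v) ⬝ᵥ (G *ᵥ (Complex.im ∘ v)) := by
    rw [dotProduct_mulVec, dotProduct_comm, ← mulVec_transpose, hG.eq]
  apply Complex.ext
  · simp [dotProduct, mulVec, Complex.re_sum, Finset.mul_sum, ← Finset.sum_add_distrib]
  · rw [Complex.ofReal_im, ← sub_eq_zero.2 hswap.symm]
    simp only [dotProduct, Pi.star_apply, RCLike.star_def, mulVec, map_apply, Finset.mul_sum,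
      Complex.im_sum, Complex.mul_im, Complex.mul_re, Complex.conj_re, Complex.conj_im,
      Complex.ofReal_re, Complex.ofReal_im, zero_mul, add_zero, sub_zero, neg_mul,
      Function.comp_apply, ← Finset.sum_sub_distrib]
    exact Finset.sum_congr rfl fun i _ => Finset.sum_congr rfl fun j _ => by ring

theorem PosDef.map_ofReal {G : Matrix n n ℝ} (hG : G.PosDef) :
    (G.map Complex.ofReal).PosDef := by
  refine .of_dotProduct_mulVec_pos (hG.isHermitian.map _ fun _ => by simp) fun v hv => ?_
  have hxy : Complex.re ∘ v ≠ 0 ∨ Complex.im ∘ v ≠ 0 := by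
    contrapose! hv
    funext i
    exact Complex.ext (congrFun hv.1 i) (congrFun hv.2 i)
  rw [(isHermitian_iff_isSymm.1 hG.isHermitian).star_dotProduct_map_ofReal_mulVec,
    Complex.zero_lt_real]
  rcases hxy with hx | hy
  · exact add_pos_of_pos_of_nonneg (hG.dotProduct_mulVec_pos hx)
      (hG.posSemidef.dotProduct_mulVec_nonneg _)
  · exact add_pos_of_nonneg_of_pos (hG.posSemidef.dotProduct_mulVec_nonneg _)
      (hG.dotProduct_mulVec_pos hy)

end OfReal

end Matrix

section Hurwitz

variable {n m : Type*} [Fintype n] [Fintype m] [DecidableEq n]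

theorem isHurwitzC_of_lyapunov {A P : Matrix n n ℂ} (hP : P.PosDef)
    (hAP : (-(Aᴴ * P + P * A)).PosDef) : IsHurwitzC A := by
  intro μ hμ
  obtain ⟨v, hv, hAv⟩ := exists_mulVec_eq_smul_of_mem_spectrum hμ
  have hquad : star v ⬝ᵥ (-(Aᴴ * P + P * A) *ᵥ v) =
      -(2 * μ.re : ℝ) * (star v ⬝ᵥ (P *ᵥ v)) := by
    rw [neg_mulVec, add_mulVec, ← mulVec_mulVec, ← mulVec_mulVec, dotProduct_neg, dotProduct_add,
      dotProduct_mulVec (star v) Aᴴ, ← star_mulVec, hAv, star_smul, smul_dotProduct,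
      mulVec_smul, dotProduct_smul, Complex.ofReal_mul, Complex.ofReal_ofNat,
      Complex.re_eq_add_conj]
    simp only [smul_eq_mul, Complex.star_def]
    ring
  have hPv := Complex.pos_iff.1 (hP.dotProduct_mulVec_pos hv)
  have hneg := Complex.pos_iff.1 (hAP.dotProduct_mulVec_pos hv)
  rw [hquad, Complex.mul_re, ← hPv.2] at hneg
  simp only [Complex.neg_re, Complex.ofReal_re, mul_zero, sub_zero] at hneg
  nlinarith [hPv.1, hneg.1]

theorem isHurwitzC_sub_smul_of_riccati {S G : Matrix n n ℂ} {B : Matrix n m ℂ}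
    {M : Matrix m n ℂ} {lamStar eps : ℝ} (hG : G.PosDef) (heps : 0 < eps)
    (hric : Sᴴ * G + G * S - lamStar • (G * B * Bᴴ * G) + eps • (1 : Matrix n n ℂ) = 0)
    (hM : M = (1 / 2 : ℝ) • (Bᴴ * G)) {lam : ℂ} (hlam : lamStar ≤ lam.re) :
    IsHurwitzC (S - lam • (B * M)) := by
  have hGh : Gᴴ = G := hG.isHermitian
  have hQ : (Bᴴ * G)ᴴ * (Bᴴ * G) = G * B * Bᴴ * G := by
    simp [conjTranspose_mul, hGh, Matrix.mul_assoc]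
  have hBM : G * (B * M) = (1 / 2 : ℝ) • (G * B * Bᴴ * G) := by
    simp [hM, Matrix.mul_assoc]
  have hMB : (B * M)ᴴ * G = (1 / 2 : ℝ) • (G * B * Bᴴ * G) := by
    simp [hM, conjTranspose_mul, hGh, Matrix.mul_assoc]
  have hconj : star lam = 2 * (lam.re : ℂ) - lam := by
    rw [Complex.re_eq_add_conj]; simp; ring
  have hlyap : -((S - lam • (B * M))ᴴ * G + G * (S - lam • (B * M))) =
      eps • (1 : Matrix n n ℂ) + (lam.re - lamStar) • ((Bᴴ * G)ᴴ * (Bᴴ * G)) := by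
    rw [conjTranspose_sub, conjTranspose_smul, Matrix.sub_mul, Matrix.mul_sub, Matrix.smul_mul,
      Matrix.mul_smul, hBM, hMB, hQ, hconj]
    linear_combination (norm := module) -hric
  refine isHurwitzC_of_lyapunov hG ?_
  rw [hlyap]
  exact (PosDef.one.smul heps).add_posSemidef
    ((posSemidef_conjTranspose_mul_self _).smul (sub_nonneg.2 hlam))

theorem isHurwitzC_map_sub_smul_of_riccati {S G : Matrix n n ℝ} {B : Matrix n m ℝ}
    {M : Matrix m n ℝ} {lamStar eps : ℝ} (hG : G.PosDef) (heps : 0 < eps)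
    (hric : Sᵀ * G + G * S - lamStar • (G * B * Bᵀ * G) + eps • (1 : Matrix n n ℝ) = 0)
    (hM : M = (1 / 2 : ℝ) • (Bᵀ * G)) {lam : ℂ} (hlam : lamStar ≤ lam.re) :
    IsHurwitzC (S.map Complex.ofReal - lam • (B * M).map Complex.ofReal) := by
  have hricC := congrArg (Matrix.map · Complex.ofRealHom) hric
  have hMC := congrArg (Matrix.map · Complex.ofRealHom) hM
  simp only [Complex.ofRealHom_eq_coe, Complex.ofReal_add, Complex.ofReal_sub, Complex.ofReal_mul,
    Complex.ofReal_zero, Complex.ofReal_one, smul_eq_mul, Complex.real_smul, implies_true,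
    Matrix.map_add, Matrix.map_sub, Matrix.map_mul, Matrix.map_smul, Matrix.map_one,
    Matrix.map_zero, transpose_map_ofRealHom] at hricC hMC
  have hBM : (B * M).map Complex.ofReal = B.map Complex.ofReal * M.map Complex.ofReal :=
    Matrix.map_mul (f := Complex.ofRealHom)
  rw [hBM]
  exact isHurwitzC_sub_smul_of_riccati hG.map_ofReal heps hricC hMC hlam

end Hurwitz

theorem stmt4_general (p m : ℕ) (S : Matrix (Fin p) (Fin p) ℝ) (B : Matrix (Fin p) (Fin m) ℝ)
    (G : Matrix (Fin p) (Fin p) ℝ) (hGpos : G.PosDef)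
    (lamStar eps : ℝ) (heps : 0 < eps)
    (hric : Sᵀ * G + G * S - lamStar • (G * B * Bᵀ * G) + eps • (1 : Matrix (Fin p) (Fin p) ℝ) = 0)
    (M : Matrix (Fin m) (Fin p) ℝ) (hM : M = (1 / 2 : ℝ) • (Bᵀ * G)) :
    (∀ lam : ℂ, lamStar ≤ lam.re →
      IsHurwitzC (S.map Complex.ofReal - lam • (B * M).map Complex.ofReal)) ∧
    ∀ (k : ℕ) (H : Matrix (Fin k) (Fin k) ℝ),
      (∀ μ ∈ spectrum ℂ (H.map Complex.ofReal), lamStar ≤ μ.re) →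
      IsHurwitz ((1 : Matrix (Fin k) (Fin k) ℝ) ⊗ₖ S - H ⊗ₖ (B * M)) := by
  have hpencil := fun lam => isHurwitzC_map_sub_smul_of_riccati (lam := lam) hGpos heps hric hM
  refine ⟨hpencil, fun k H hH μ hμ => ?_⟩
  rw [Matrix.map_sub _ Complex.ofReal_sub, map_kronecker _ Complex.ofReal_mul,
    map_kronecker _ Complex.ofReal_mul, Matrix.map_one _ Complex.ofReal_zero Complex.ofReal_one]
    at hμ
  obtain ⟨r, hr, hμr⟩ :=
    exists_mem_spectrum_of_mem_spectrum_one_kronecker_sub (IsAlgClosed.splits _) hμ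
  exact hpencil r (hH r hr) μ hμr

/-- Remark following Lemma 2: if `G = Gᵀ > 0` solves the Riccati equation
`SᵀG + GS − λ*·GBBᵀG + εI = 0` and `M = BᵀG/2`, then `S − λBM` is Hurwitz for every complex `λ`
with `Re λ ≥ λ*`; consequently `A_ζ = I ⊗ S − H ⊗ BM` is Hurwitz whenever all eigenvalues of `H`
have real part at least `λ*`. -/
theorem stmt4 (p m : ℕ) (S : Matrix (Fin p) (Fin p) ℝ) (B : Matrix (Fin p) (Fin m) ℝ)
    (G : Matrix (Fin p) (Fin p) ℝ) (hGsymm : G.IsSymm) (hGpos : G.PosDef)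
    (lamStar eps : ℝ) (hlam : 0 < lamStar) (heps : 0 < eps)
    (hric : Sᵀ * G + G * S - lamStar • (G * B * Bᵀ * G) + eps • (1 : Matrix (Fin p) (Fin p) ℝ) = 0)
    (M : Matrix (Fin m) (Fin p) ℝ) (hM : M = (1 / 2 : ℝ) • (Bᵀ * G)) :
    (∀ lam : ℂ, lamStar ≤ lam.re →
      IsHurwitzC (S.map Complex.ofReal - lam • (B * M).map Complex.ofReal)) ∧
    ∀ (k : ℕ) (H : Matrix (Fin k) (Fin k) ℝ),
      (∀ μ ∈ spectrum ℂ (H.map Complex.ofReal), lamStar ≤ μ.re) →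
      IsHurwitz ((1 : Matrix (Fin k) (Fin k) ℝ) ⊗ₖ S - H ⊗ₖ (B * M)) :=
  stmt4_general p m S B G hGpos lamStar eps heps hric M hM
end

section
/- Let ς > 0 and ρ > 0, and define S̄ = [[−ς−ρ, ς], [−ρ, 0]] and P = (1/(2ς))·[[1, −1], [−1, (ρ+2ς)/ρ]]. Then P is symmetric positive definite and satisfies the Lyapunov equation P S̄ + S̄ᵀ P = −I. (Claim established in the proof of Corollary 1 of the paper.) -/
open Filter Matrix Kronecker

theorem posDef_fin_two_of_pos {a b c : ℝ} (ha : 0 < a) (hdet : 0 < a * c - b ^ 2) :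
    (!![a, b; b, c]).PosDef := by
  refine PosDef.of_dotProduct_mulVec_pos ?_ fun x hx => ?_
  · ext i j
    fin_cases i <;> fin_cases j <;> rfl
  have hsq : a * (star x ⬝ᵥ (!![a, b; b, c] *ᵥ x)) =
      (a * x 0 + b * x 1) ^ 2 + (a * c - b ^ 2) * x 1 ^ 2 := by
    simp only [star_trivial, dotProduct, mulVec, Fin.sum_univ_two, of_apply, cons_val',
      cons_val_zero, cons_val_one, empty_val', cons_val_fin_one]
    ring
  have hpos : 0 < (a * x 0 + b * x 1) ^ 2 + (a * c - b ^ 2) * x 1 ^ 2 := by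
    by_cases hx1 : x 1 = 0
    · have hx0 : x 0 ≠ 0 := fun hx0 => hx (by ext i; fin_cases i <;> assumption)
      rw [hx1]
      simpa using sq_pos_of_ne_zero (mul_ne_zero ha.ne' hx0)
    · exact add_pos_of_nonneg_of_pos (sq_nonneg _) (mul_pos hdet (sq_pos_of_ne_zero hx1))
  exact pos_of_mul_pos_right (hsq ▸ hpos) ha.le

theorem lyapunov_eq {ς ρ : ℝ} (hς : ς ≠ 0) (hρ : ρ ≠ 0) :
    (1 / (2 * ς)) • !![(1 : ℝ), -1; -1, (ρ + 2 * ς) / ρ] * !![-ς - ρ, ς; -ρ, 0] +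
      (!![-ς - ρ, ς; -ρ, 0])ᵀ * ((1 / (2 * ς)) • !![(1 : ℝ), -1; -1, (ρ + 2 * ς) / ρ]) = -1 := by
  ext i j
  fin_cases i <;> fin_cases j <;>
    simp only [Matrix.add_apply, mul_apply, Matrix.smul_apply, transpose_apply, Fin.sum_univ_two,
      of_apply, cons_val_zero, cons_val_one, Matrix.neg_apply, one_fin_two,
      smul_eq_mul, Fin.zero_eta, Fin.mk_one] <;> field_simp <;> ring

/-- Claim from the proof of Corollary 1: `P = (1/(2ς))·[[1, −1], [−1, (ρ+2ς)/ρ]]` is symmetric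
positive definite and solves the Lyapunov equation `P S̄ + S̄ᵀ P = −I` for
`S̄ = [[−ς−ρ, ς], [−ρ, 0]]`. -/
theorem stmt6 (ς ρ : ℝ) (hς : 0 < ς) (hρ : 0 < ρ)
    (Sbar P : Matrix (Fin 2) (Fin 2) ℝ)
    (hSbar : Sbar = !![-ς - ρ, ς; -ρ, 0])
    (hP : P = (1 / (2 * ς)) • !![(1 : ℝ), -1; -1, (ρ + 2 * ς) / ρ]) :
    P.IsSymm ∧ P.PosDef ∧ P * Sbar + Sbarᵀ * P = -1 := by
  subst hSbar hP
  have hdet : 0 < 1 * ((ρ + 2 * ς) / ρ) - (-1) ^ 2 := by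
    field_simp
    linarith
  have hPD := (posDef_fin_two_of_pos one_pos hdet).smul (one_div_pos.2 (mul_pos two_pos hς))
  exact ⟨isHermitian_iff_isSymm.1 hPD.isHermitian, hPD, lyapunov_eq hς.ne' hρ.ne'⟩
end

section
/- Let A_ζ ∈ ℝ^{m×m}, D ∈ ℝ^{m×k}, and let Q = Qᵀ > 0 be a symmetric positive definite matrix satisfying QA_ζ + A_ζᵀQ = −2I. Let φ : [0,∞) → ℝ^k be continuous and bounded, and let ζ : [0,∞) → ℝ^m be a differentiable solution of ζ'(t) = A_ζ ζ(t) + D φ(t). Then limsup_{t→∞} ‖ζ(t)‖ ≤ √(ϖ(Q)) · ‖QD‖ · limsup_{t→∞} ‖φ(t)‖. (Input-to-state stability estimate (40)–(41) established in the proof of Lemma 2 of the paper, with D = W ⊗ BM.) -/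
open Filter Matrix Kronecker

/-!
`V(z) = ⟪z, Q z⟫` is a Lyapunov function for `ζ' = A_ζ ζ + D φ`: it satisfies
`λ_min(Q) ‖z‖² ≤ V(z) ≤ λ_max(Q) ‖z‖²`, and the Lyapunov equation gives
`V' = -2 ‖ζ‖² + 2 ⟪ζ, Q D φ⟫ ≤ -2 ‖ζ‖ (‖ζ‖ - ‖QD‖ ‖φ‖)`.
Once `‖φ‖ ≤ L + ε`, with `L = limsup ‖φ‖`, `V` decreases at a uniform rate while
`V ≥ λ_max(Q) ρ²` for any `ρ > ‖QD‖ (L + ε)`; hence `V` eventually stays below that level, so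
`‖ζ‖ ≤ √ϖ(Q) ρ` eventually, and `ε → 0` gives the estimate.
-/

open RealInnerProductSpace

section Barrier

variable {v v' : ℝ → ℝ} {T M : ℝ}

theorem le_of_hasDerivAt_neg_of_eq (hv : ∀ t, T ≤ t → HasDerivAt v (v' t) t)
    (hv' : ∀ t, T ≤ t → v t = M → v' t < 0) (hT : v T ≤ M) {t : ℝ} (ht : T ≤ t) : v t ≤ M :=
  image_le_of_deriv_right_lt_deriv_boundary' (B := fun _ ↦ M) (B' := 0)
    (fun s hs ↦ (hv s hs.1).continuousAt.continuousWithinAt)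
    (fun s hs ↦ (hv s hs.1).hasDerivWithinAt) hT continuousOn_const
    (fun _ _ ↦ hasDerivWithinAt_const _ _ _) (fun s hs ↦ hv' s hs.1) ⟨ht, le_rfl⟩

theorem le_sub_mul_of_hasDerivAt_le (hv : ∀ t, T ≤ t → HasDerivAt v (v' t) t) {γ : ℝ}
    (hv' : ∀ t, T ≤ t → v' t ≤ -γ) {t : ℝ} (ht : T ≤ t) : v t ≤ v T - γ * (t - T) :=
  image_le_of_deriv_right_le_deriv_boundary (B := fun s ↦ v T - γ * (s - T)) (B' := fun _ ↦ -γ)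
    (fun s hs ↦ (hv s hs.1).continuousAt.continuousWithinAt)
    (fun s hs ↦ (hv s hs.1).hasDerivWithinAt) (by simp) (by fun_prop)
    (fun s _ ↦ by simpa using (((hasDerivAt_id s).sub_const T).const_mul γ).const_sub (v T)
      |>.hasDerivWithinAt)
    (fun s hs ↦ hv' s hs.1) ⟨ht, le_rfl⟩

theorem exists_le_of_hasDerivAt_le_neg {γ c : ℝ} (hγ : 0 < γ)
    (hv : ∀ t, T ≤ t → HasDerivAt v (v' t) t) (hv' : ∀ t, T ≤ t → M ≤ v t → v' t ≤ -γ)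
    (hc : ∀ t, T ≤ t → c ≤ v t) : ∃ t, T ≤ t ∧ v t ≤ M := by
  by_contra! hgt
  set t := T + (v T - c + 1) / γ
  have hTt : T ≤ t := by
    have := hc T le_rfl
    have : 0 ≤ (v T - c + 1) / γ := by positivity
    linarith
  have hdecay := le_sub_mul_of_hasDerivAt_le hv (fun s hs ↦ hv' s hs (hgt s hs).le) hTt
  have : γ * (t - T) = v T - c + 1 := by simp only [t]; field_simp; ring
  linarith [hc t hTt]

theorem eventually_le_of_hasDerivAt_le_neg {γ c : ℝ} (hγ : 0 < γ)
    (hv : ∀ t, T ≤ t → HasDerivAt v (v' t) t) (hv' : ∀ t, T ≤ t → M ≤ v t → v' t ≤ -γ)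
    (hc : ∀ t, T ≤ t → c ≤ v t) : ∀ᶠ t in atTop, v t ≤ M := by
  obtain ⟨t₀, hTt₀, ht₀⟩ := exists_le_of_hasDerivAt_le_neg hγ hv hv' hc
  filter_upwards [eventually_ge_atTop t₀] with t ht
  exact le_of_hasDerivAt_neg_of_eq (fun s hs ↦ hv s (hTt₀.trans hs))
    (fun s hs hvs ↦ (hv' s (hTt₀.trans hs) hvs.ge).trans_lt (neg_lt_zero.2 hγ)) ht₀ ht

end Barrier

section Lyapunov

variable {E F : Type*} [NormedAddCommGroup E] [NormedAddCommGroup F]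
  {x : ℝ → E} {V V' : ℝ → ℝ}

theorem eventually_le_of_lyapunov {b R ρ T : ℝ} (hb : 0 < b) (hρ : 0 < ρ) (hRρ : R < ρ)
    (hV0 : ∀ t, T ≤ t → 0 ≤ V t) (hVb : ∀ t, V t ≤ b * ‖x t‖ ^ 2)
    (hV : ∀ t, T ≤ t → HasDerivAt V (V' t) t)
    (hV' : ∀ t, T ≤ t → V' t ≤ -2 * ‖x t‖ ^ 2 + 2 * R * ‖x t‖) :
    ∀ᶠ t in atTop, V t ≤ b * ρ ^ 2 := by
  refine eventually_le_of_hasDerivAt_le_neg (γ := 2 * ρ * (ρ - R)) (by nlinarith) hV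
    (fun t ht hVt ↦ ?_) hV0
  have : ρ ≤ ‖x t‖ := by
    have : ρ ^ 2 ≤ ‖x t‖ ^ 2 := le_of_mul_le_mul_left (hVt.trans (hVb t)) hb
    exact (sq_le_sq₀ hρ.le (norm_nonneg _)).1 this
  nlinarith [hV' t ht]

theorem limsup_norm_nonneg {α : Type*} {l : Filter α} [l.NeBot] {f : α → F}
    (hf : IsBoundedUnder (· ≤ ·) l fun t ↦ ‖f t‖) : 0 ≤ limsup (fun t ↦ ‖f t‖) l :=
  le_limsup_of_frequently_le (.of_forall fun _ ↦ norm_nonneg _) hf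

open Topology in
theorem limsup_norm_le_of_lyapunov {φ : ℝ → F} {a b K : ℝ} (ha : 0 < a) (hb : 0 < b)
    (hK : 0 ≤ K) (hφ : IsBoundedUnder (· ≤ ·) atTop fun t ↦ ‖φ t‖)
    (hVa : ∀ t, a * ‖x t‖ ^ 2 ≤ V t) (hVb : ∀ t, V t ≤ b * ‖x t‖ ^ 2)
    (hV : ∀ᶠ t in atTop, HasDerivAt V (V' t) t)
    (hV' : ∀ᶠ t in atTop, V' t ≤ -2 * ‖x t‖ ^ 2 + 2 * K * ‖x t‖ * ‖φ t‖) :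
    limsup (fun t ↦ ‖x t‖) atTop ≤ √(b / a) * K * limsup (fun t ↦ ‖φ t‖) atTop := by
  set L := limsup (fun t ↦ ‖φ t‖) atTop
  have hL : 0 ≤ L := limsup_norm_nonneg hφ
  have hε : ∀ ε > 0, limsup (fun t ↦ ‖x t‖) atTop ≤ √(b / a) * (K * (L + ε) + ε) := by
    intro ε hε
    set ρ := K * (L + ε) + ε
    obtain ⟨T, hT⟩ := eventually_atTop.1 <|
      (hV.and hV').and (eventually_lt_of_limsup_lt (lt_add_of_pos_right L hε) hφ)
    have hR : ∀ t, T ≤ t → V' t ≤ -2 * ‖x t‖ ^ 2 + 2 * (K * (L + ε)) * ‖x t‖ := by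
      intro t ht
      obtain ⟨⟨-, hV't⟩, hφt⟩ := hT t ht
      nlinarith [mul_le_mul_of_nonneg_left hφt.le hK, norm_nonneg (x t)]
    have hVρ := eventually_le_of_lyapunov (ρ := ρ) hb (by positivity) (by linarith)
      (fun t _ ↦ (by positivity : 0 ≤ a * ‖x t‖ ^ 2).trans (hVa t)) hVb
      (fun t ht ↦ (hT t ht).1.1) hR
    refine limsup_le_of_le (isCoboundedUnder_le_of_le atTop fun t ↦ norm_nonneg (x t)) ?_
    filter_upwards [hVρ] with t ht
    rw [← Real.sqrt_sq (norm_nonneg (x t)), ← Real.sqrt_sq (by positivity : 0 ≤ ρ),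
      ← Real.sqrt_mul (by positivity)]
    refine Real.sqrt_le_sqrt ?_
    rw [div_mul_eq_mul_div, le_div_iff₀ ha]
    nlinarith [hVa t]
  have hlim : Tendsto (fun ε ↦ √(b / a) * (K * (L + ε) + ε)) (𝓝[>] 0)
      (𝓝 (√(b / a) * (K * (L + 0) + 0))) :=
    ((Continuous.tendsto (by fun_prop) 0)).mono_left nhdsWithin_le_nhds
  simpa [mul_assoc] using ge_of_tendsto hlim (eventually_nhdsWithin_of_forall hε)

end Lyapunov

theorem HasDerivAt.inner_apply_self {E : Type*} [NormedAddCommGroup E] [InnerProductSpace ℝ E]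
    {T : E →L[ℝ] E} (hT : (T : E →ₗ[ℝ] E).IsSymmetric) {x : ℝ → E} {x' : E} {t : ℝ}
    (hx : HasDerivAt x x' t) :
    HasDerivAt (fun s ↦ ⟪x s, T (x s)⟫) (2 * ⟪x t, T x'⟫) t := by
  refine (hx.inner ℝ (T.hasFDerivAt.comp_hasDerivAt t hx)).congr_deriv ?_
  have : ⟪x', T (x t)⟫ = ⟪x t, T x'⟫ := (hT x' (x t)).symm.trans (real_inner_comm _ _)
  simp only [Function.comp_apply, this]
  ring

namespace Matrix

variable {n : Type*} [Fintype n] [DecidableEq n] {Q : Matrix n n ℝ}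

theorem IsHermitian.two_mul_inner_toEuclideanLin_mul (hQ : Q.IsHermitian) (A : Matrix n n ℝ)
    (z : EuclideanSpace ℝ n) :
    2 * ⟪z, toEuclideanLin Q (toEuclideanLin A z)⟫ = ⟪z, toEuclideanLin (Q * A + Aᵀ * Q) z⟫ := by
  have hsymm := isSymmetric_toEuclideanLin_iff.2 hQ
  have hAt : toEuclideanLin Aᵀ = LinearMap.adjoint (toEuclideanLin A) := by
    rw [← conjTranspose_eq_transpose_of_trivial, toEuclideanLin_conjTranspose_eq_adjoint]
  simp only [map_add, toLpLin_mul_same, LinearMap.add_apply, LinearMap.comp_apply, inner_add_right,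
    hAt, LinearMap.adjoint_inner_right]
  rw [← hsymm, real_inner_comm]
  ring

theorem IsHermitian.eigMin_mul_norm_sq_le_inner (hQ : Q.IsHermitian) (x : EuclideanSpace ℝ n) :
    eigMin Q * ‖x‖ ^ 2 ≤ ⟪x, toEuclideanLin Q x⟫ := by
  have hpos : (Q - algebraMap ℝ _ (eigMin Q)).PosSemidef := by
    refine posSemidef_iff_isHermitian_and_spectrum_nonneg.2
      ⟨IsSelfAdjoint.sub hQ ((IsSelfAdjoint.all _).algebraMap _), ?_⟩
    rw [← spectrum.sub_singleton_eq]
    rintro _ ⟨μ, hμ, _, rfl, rfl⟩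
    exact sub_nonneg.2 (csInf_le Q.finite_real_spectrum.bddBelow hμ)
  simpa [Algebra.algebraMap_eq_smul_one, inner_sub_right, real_inner_smul_right] using
    (isPositive_toEuclideanLin_iff.2 hpos).inner_nonneg_right x

theorem IsHermitian.inner_le_eigMax_mul_norm_sq (hQ : Q.IsHermitian) (x : EuclideanSpace ℝ n) :
    ⟪x, toEuclideanLin Q x⟫ ≤ eigMax Q * ‖x‖ ^ 2 := by
  have hpos : (algebraMap ℝ _ (eigMax Q) - Q).PosSemidef := by
    refine posSemidef_iff_isHermitian_and_spectrum_nonneg.2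
      ⟨IsSelfAdjoint.sub ((IsSelfAdjoint.all _).algebraMap _) hQ, ?_⟩
    rw [← spectrum.singleton_sub_eq]
    rintro _ ⟨_, rfl, μ, hμ, rfl⟩
    exact sub_nonneg.2 (le_csSup Q.finite_real_spectrum.bddAbove hμ)
  simpa [Algebra.algebraMap_eq_smul_one, inner_sub_right, real_inner_smul_right] using
    (isPositive_toEuclideanLin_iff.2 hpos).inner_nonneg_right x

theorem IsHermitian.spectrum_real_nonempty [Nonempty n] (hQ : Q.IsHermitian) :
    (spectrum ℝ Q).Nonempty :=
  hQ.spectrum_real_eq_range_eigenvalues ▸ Set.range_nonempty _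

theorem PosDef.eigMin_pos_s9 [Nonempty n] (hQ : Q.PosDef) : 0 < eigMin Q := by
  obtain ⟨i, hi⟩ : eigMin Q ∈ Set.range hQ.1.eigenvalues :=
    hQ.1.spectrum_real_eq_range_eigenvalues ▸
      hQ.1.spectrum_real_nonempty.csInf_mem Q.finite_real_spectrum
  exact hi ▸ hQ.eigenvalues_pos i

theorem IsHermitian.eigMin_le_eigMax [Nonempty n] (hQ : Q.IsHermitian) : eigMin Q ≤ eigMax Q :=
  csInf_le_csSup hQ.spectrum_real_nonempty
    Q.finite_real_spectrum.bddBelow Q.finite_real_spectrum.bddAbove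

theorem inner_toEuclideanLin_le {k l : Type*} [Fintype k] [Fintype l] [DecidableEq l]
    (M : Matrix k l ℝ) (z : EuclideanSpace ℝ k) (u : EuclideanSpace ℝ l) :
    ⟪z, toEuclideanLin M u⟫ ≤ opNorm M * ‖z‖ * ‖u‖ :=
  calc ⟪z, toEuclideanLin M u⟫ ≤ ‖z‖ * ‖toEuclideanLin M u‖ := real_inner_le_norm _ _
    _ ≤ ‖z‖ * (opNorm M * ‖u‖) := by
      gcongr; exact (LinearMap.toContinuousLinearMap (toEuclideanLin M)).le_opNorm u
    _ = opNorm M * ‖z‖ * ‖u‖ := by ring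

end Matrix

theorem stmt9_general (m k : ℕ) (Aζ : Matrix (Fin m) (Fin m) ℝ) (D : Matrix (Fin m) (Fin k) ℝ)
    (Q : Matrix (Fin m) (Fin m) ℝ) (hQpos : Q.PosDef)
    (hlyap : Q * Aζ + Aζᵀ * Q = -((2 : ℝ) • (1 : Matrix (Fin m) (Fin m) ℝ)))
    (φ : ℝ → EuclideanSpace ℝ (Fin k))
    (hφb : ∃ c : ℝ, ∀ t, 0 ≤ t → ‖φ t‖ ≤ c)
    (ζ : ℝ → EuclideanSpace ℝ (Fin m))
    (hζ : ∀ t, 0 ≤ t → HasDerivAt ζ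
      (Matrix.toEuclideanLin Aζ (ζ t) + Matrix.toEuclideanLin D (φ t)) t) :
    limsup (fun t => ‖ζ t‖) atTop ≤
      Real.sqrt (varpi Q) * opNorm (Q * D) * limsup (fun t => ‖φ t‖) atTop := by
  have hφ : IsBoundedUnder (· ≤ ·) atTop fun t ↦ ‖φ t‖ := by
    obtain ⟨c, hc⟩ := hφb
    exact isBoundedUnder_of_eventually_le (a := c) ((eventually_ge_atTop 0).mono hc)
  rcases isEmpty_or_nonempty (Fin m) with hm | hm
  -- For `m = 0` the spectrum of `Q` is empty and `eigMin Q = sInf ∅ = 0`; but then `ζ ≡ 0`.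
  · have hζ0 : (fun t ↦ ‖ζ t‖) = fun _ ↦ 0 := funext fun t ↦ by simp [Subsingleton.elim (ζ t) 0]
    rw [hζ0, limsup_const]
    exact mul_nonneg (mul_nonneg (Real.sqrt_nonneg _) (norm_nonneg _)) (limsup_norm_nonneg hφ)
  have hQ := hQpos.isHermitian
  refine limsup_norm_le_of_lyapunov hQpos.eigMin_pos_s9
    (hQpos.eigMin_pos_s9.trans_le hQ.eigMin_le_eigMax) (norm_nonneg _) hφ
    (fun t ↦ hQ.eigMin_mul_norm_sq_le_inner (ζ t)) (fun t ↦ hQ.inner_le_eigMax_mul_norm_sq (ζ t))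
    (Eventually.mono (eventually_ge_atTop 0) fun t ht ↦
      (hζ t ht).inner_apply_self (T := (toEuclideanLin Q).toContinuousLinearMap)
        (isSymmetric_toEuclideanLin_iff.2 hQ)) (.of_forall fun t ↦ ?_)
  have hdiss : 2 * ⟪ζ t, toEuclideanLin Q (toEuclideanLin Aζ (ζ t))⟫ = -2 * ‖ζ t‖ ^ 2 := by
    rw [hQ.two_mul_inner_toEuclideanLin_mul, hlyap]
    simp [real_inner_smul_right]
  have hforce := inner_toEuclideanLin_le (Q * D) (ζ t) (φ t)
  simp only [LinearMap.coe_toContinuousLinearMap', map_add, inner_add_right, mul_add, hdiss,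
    toLpLin_mul_same, LinearMap.comp_apply] at hforce ⊢
  linarith

/-- Input-to-state stability estimate (40)–(41) from the proof of Lemma 2: if `Q = Qᵀ > 0`
solves `QA_ζ + A_ζᵀQ = −2I` and `ζ' = A_ζ ζ + Dφ` with `φ` continuous and bounded, then
`limsup ‖ζ‖ ≤ √(ϖ(Q))·‖QD‖·limsup ‖φ‖`. -/
theorem stmt9 (m k : ℕ) (Aζ : Matrix (Fin m) (Fin m) ℝ) (D : Matrix (Fin m) (Fin k) ℝ)
    (Q : Matrix (Fin m) (Fin m) ℝ) (hQsymm : Q.IsSymm) (hQpos : Q.PosDef)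
    (hlyap : Q * Aζ + Aζᵀ * Q = -((2 : ℝ) • (1 : Matrix (Fin m) (Fin m) ℝ)))
    (φ : ℝ → EuclideanSpace ℝ (Fin k)) (hφc : ContinuousOn φ (Set.Ici (0 : ℝ)))
    (hφb : ∃ c : ℝ, ∀ t, 0 ≤ t → ‖φ t‖ ≤ c)
    (ζ : ℝ → EuclideanSpace ℝ (Fin m))
    (hζ : ∀ t, 0 ≤ t → HasDerivAt ζ
      (Matrix.toEuclideanLin Aζ (ζ t) + Matrix.toEuclideanLin D (φ t)) t) :
    limsup (fun t => ‖ζ t‖) atTop ≤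
      Real.sqrt (varpi Q) * opNorm (Q * D) * limsup (fun t => ‖φ t‖) atTop :=
  stmt9_general m k Aζ D Q hQpos hlyap φ hφb ζ hζ
end
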